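/- For γ > 0, the space H²_γ(ℝ²) is closed under taking powers: if u ∈ H²_γ(ℝ²) and k ≥ 1 is an integer, then u^k ∈ H²_γ(ℝ²). -/

import Mathlib

/-!
For `γ ≥ 0` an element `u` of `H²_γ` lies in `W^{2,2}(ℝ²)`, so by Leibniz and Hölder `Φ = |u|²`
has integrable derivatives up to order two. Integrating `∂ₓΦ` along horizontal lines and `∂ᵧ∂ₓΦ`
along vertical ones gives `‖Φ‖_∞ ≤ ‖D²Φ‖₁`, so `u` is bounded. For `h = ⟨z⟩^{γ/2} Du` the
one-dimensional bounds `|h|²(x, y) ≤ ∫ |∂ₓ|h|²|(s, y) ds` and `|h|²(x, y) ≤ ∫ |∂ᵧ|h|²|(x, t) dt`,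
multiplied and integrated, give `‖h‖₄² ≤ ‖D|h|²‖₁ < ∞`, i.e. `|Du|² ∈ L²_γ`.

Bounded elements of `H²_γ` with `|Du|² ∈ L²_γ` are closed under products: in `D²(fg)` the cross
term `2 Df Dg` is controlled by `|Df|² + |Dg|²`, and all other terms by `‖f‖_∞`, `‖g‖_∞`.
Induction on `k` finishes the proof.
-/

open MeasureTheory Finset

noncomputable section

/-- Japanese bracket weight `⟨z⟩^γ = (1+|z|²)^{γ/2}` on `ℝ² ≅ ℂ`. -/
def wt (γ : ℝ) (z : ℂ) : ℝ := (1 + ‖z‖ ^ 2) ^ (γ / 2)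

/-- Membership in the weighted Sobolev space `H²_γ(ℝ²)`. -/
def H2gammaMem (γ : ℝ) (u : ℂ → ℂ) : Prop :=
  ContDiff ℝ 2 u ∧
  ∀ i : ℕ, i ≤ 2 →
    MemLp (fun z => wt γ z * ‖iteratedFDeriv ℝ i u z‖) 2 volume

open Filter Set
open scoped ENNReal Topology

section Weight

lemma wt_pos (γ : ℝ) (z : ℂ) : 0 < wt γ z := by
  unfold wt; positivity

lemma one_le_wt {γ : ℝ} (hγ : 0 ≤ γ) (z : ℂ) : 1 ≤ wt γ z :=
  Real.one_le_rpow (le_add_of_nonneg_right (sq_nonneg _)) (by positivity)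

lemma wt_le_wt {γ δ : ℝ} (h : γ ≤ δ) (z : ℂ) : wt γ z ≤ wt δ z :=
  Real.rpow_le_rpow_of_exponent_le (le_add_of_nonneg_right (sq_nonneg _)) (by linarith)

lemma sq_wt_half (γ : ℝ) (z : ℂ) : wt (γ / 2) z ^ 2 = wt γ z := by
  unfold wt
  rw [← Real.rpow_natCast, ← Real.rpow_mul (by positivity)]
  ring_nf

lemma contDiff_wt (γ : ℝ) {n : WithTop ℕ∞} : ContDiff ℝ n (wt γ) :=
  (contDiff_const.add (contDiff_norm_sq ℝ)).rpow_const_of_ne fun z => by positivity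

lemma continuous_wt (γ : ℝ) : Continuous (wt γ) :=
  (contDiff_wt γ (n := 0)).continuous

lemma norm_fderiv_wt_le (γ : ℝ) (z : ℂ) : ‖fderiv ℝ (wt γ) z‖ ≤ |γ| / 2 * wt γ z := by
  have hs : 0 < 1 + ‖z‖ ^ 2 := by positivity
  have hderiv := ((hasStrictFDerivAt_norm_sq z).hasFDerivAt.const_add 1).rpow_const
    (p := γ / 2) (Or.inl hs.ne')
  rw [show wt γ = fun z => (1 + ‖z‖ ^ 2) ^ (γ / 2) from rfl, hderiv.fderiv, norm_smul,
    Real.norm_eq_abs, abs_mul, abs_div, abs_two, abs_of_pos (Real.rpow_pos_of_pos hs _)]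
  -- `2 ‖z‖ ≤ 1 + ‖z‖²` absorbs the loss of one power of the base
  have h2z : ‖2 • innerSL ℝ z‖ ≤ 1 + ‖z‖ ^ 2 :=
    calc ‖2 • innerSL ℝ z‖ ≤ 2 * ‖z‖ := by
          simpa only [innerSL_apply_norm, nsmul_eq_mul, Nat.cast_ofNat] using
            norm_nsmul_le (n := 2) (a := innerSL ℝ z)
      _ ≤ 1 + ‖z‖ ^ 2 := by nlinarith [sq_nonneg (‖z‖ - 1)]
  calc |γ| / 2 * (1 + ‖z‖ ^ 2) ^ (γ / 2 - 1) * ‖2 • innerSL ℝ z‖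
      ≤ |γ| / 2 * (1 + ‖z‖ ^ 2) ^ (γ / 2 - 1) * (1 + ‖z‖ ^ 2) := by gcongr
    _ = |γ| / 2 * wt γ z := by rw [mul_assoc, ← Real.rpow_add_one hs.ne', sub_add_cancel, wt]

end Weight

section Slices

variable {E : Type*} [NormedAddCommGroup E] [NormedSpace ℝ E] [CompleteSpace E]

lemma enorm_le_lintegral_enorm_deriv {φ φ' : ℝ → E} (hφ : ∀ t, HasDerivAt φ (φ' t) t)
    (hφi : Integrable φ) (hφ'i : Integrable φ') (x : ℝ) : ‖φ x‖ₑ ≤ ∫⁻ t, ‖φ' t‖ₑ := by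
  have hlim : Tendsto φ atBot (𝓝 0) :=
    tendsto_zero_of_hasDerivAt_of_integrableOn_Iic (a := x) (fun t _ => hφ t)
      hφ'i.integrableOn hφi.integrableOn
  have hftc : ∫ t in Iic x, φ' t = φ x := by
    simpa using integral_Iic_of_hasDerivAt_of_tendsto' (fun t _ => hφ t) hφ'i.integrableOn hlim
  calc ‖φ x‖ₑ = ‖∫ t in Iic x, φ' t‖ₑ := by rw [hftc]
    _ ≤ ∫⁻ t in Iic x, ‖φ' t‖ₑ := enorm_integral_le_lintegral_enorm _
    _ ≤ ∫⁻ t, ‖φ' t‖ₑ := setLIntegral_le_lintegral _ _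

lemma ae_forall_enorm_le_lintegral_fst {f f₁ : ℝ × ℝ → E} (hf : Integrable f)
    (hf₁ : Integrable f₁) (hd : ∀ p : ℝ × ℝ, HasDerivAt (fun s => f (s, p.2)) (f₁ p) p.1) :
    ∀ᵐ y : ℝ, ∀ x, ‖f (x, y)‖ₑ ≤ ∫⁻ s, ‖f₁ (s, y)‖ₑ := by
  filter_upwards [hf.prod_left_ae, hf₁.prod_left_ae] with y hy hy₁ x
  exact enorm_le_lintegral_enorm_deriv (fun s => hd (s, y)) hy hy₁ x

lemma ae_forall_enorm_le_lintegral_snd {f f₂ : ℝ × ℝ → E} (hf : Integrable f)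
    (hf₂ : Integrable f₂) (hd : ∀ p : ℝ × ℝ, HasDerivAt (fun t => f (p.1, t)) (f₂ p) p.2) :
    ∀ᵐ x : ℝ, ∀ y, ‖f (x, y)‖ₑ ≤ ∫⁻ t, ‖f₂ (x, t)‖ₑ :=
  ae_forall_enorm_le_lintegral_fst hf.swap hf₂.swap fun p => hd p.swap

lemma ae_enorm_le_lintegral_enorm_mixed {f f₁ f₁₂ : ℝ × ℝ → E} (hf : Integrable f)
    (hf₁ : Integrable f₁) (hf₁₂ : Integrable f₁₂)
    (hd₁ : ∀ p : ℝ × ℝ, HasDerivAt (fun s => f (s, p.2)) (f₁ p) p.1)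
    (hd₁₂ : ∀ p : ℝ × ℝ, HasDerivAt (fun t => f₁ (p.1, t)) (f₁₂ p) p.2) :
    ∀ᵐ p : ℝ × ℝ, ‖f p‖ₑ ≤ ∫⁻ q, ‖f₁₂ q‖ₑ := by
  have hx := ae_forall_enorm_le_lintegral_fst hf hf₁ hd₁
  have hy := ae_forall_enorm_le_lintegral_snd hf₁ hf₁₂ hd₁₂
  have hbound : ∀ᵐ y : ℝ, ∀ x, ‖f (x, y)‖ₑ ≤ ∫⁻ q, ‖f₁₂ q‖ₑ := by
    filter_upwards [hx] with y hy' x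
    calc ‖f (x, y)‖ₑ ≤ ∫⁻ s, ‖f₁ (s, y)‖ₑ := hy' x
      _ ≤ ∫⁻ s, ∫⁻ t, ‖f₁₂ (s, t)‖ₑ := lintegral_mono_ae (hy.mono fun s hs => hs y)
      _ = ∫⁻ q, ‖f₁₂ q‖ₑ := (lintegral_prod _ hf₁₂.aestronglyMeasurable.enorm).symm
  exact Measure.quasiMeasurePreserving_snd.ae hbound |>.mono fun p hp => hp p.1

lemma lintegral_enorm_sq_le_mul {f f₁ f₂ : ℝ × ℝ → E} (hf : Integrable f)
    (hf₁ : Integrable f₁) (hf₂ : Integrable f₂)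
    (hd₁ : ∀ p : ℝ × ℝ, HasDerivAt (fun s => f (s, p.2)) (f₁ p) p.1)
    (hd₂ : ∀ p : ℝ × ℝ, HasDerivAt (fun t => f (p.1, t)) (f₂ p) p.2) :
    ∫⁻ p, ‖f p‖ₑ ^ 2 ≤ (∫⁻ p, ‖f₁ p‖ₑ) * ∫⁻ p, ‖f₂ p‖ₑ := by
  set F : ℝ → ℝ≥0∞ := fun y => ∫⁻ s, ‖f₁ (s, y)‖ₑ
  set G : ℝ → ℝ≥0∞ := fun x => ∫⁻ t, ‖f₂ (x, t)‖ₑ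
  have hF : ∀ᵐ p : ℝ × ℝ, ‖f p‖ₑ ≤ F p.2 :=
    Measure.quasiMeasurePreserving_snd.ae (ae_forall_enorm_le_lintegral_fst hf hf₁ hd₁)
      |>.mono fun p hp => hp p.1
  have hG : ∀ᵐ p : ℝ × ℝ, ‖f p‖ₑ ≤ G p.1 :=
    Measure.quasiMeasurePreserving_fst.ae (ae_forall_enorm_le_lintegral_snd hf hf₂ hd₂)
      |>.mono fun p hp => hp p.2
  calc ∫⁻ p, ‖f p‖ₑ ^ 2 ≤ ∫⁻ p : ℝ × ℝ, G p.1 * F p.2 := by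
        refine lintegral_mono_ae ?_
        filter_upwards [hF, hG] with p hpF hpG
        rw [sq]
        exact mul_le_mul' hpG hpF
    _ = (∫⁻ x, G x) * ∫⁻ y, F y :=
        lintegral_prod_mul hf₂.aestronglyMeasurable.enorm.lintegral_prod_right'
          hf₁.aestronglyMeasurable.enorm.lintegral_prod_left'
    _ = (∫⁻ p, ‖f₁ p‖ₑ) * ∫⁻ p, ‖f₂ p‖ₑ := by
        rw [mul_comm, Measure.volume_eq_prod, lintegral_prod _ hf₂.aestronglyMeasurable.enorm,
          lintegral_prod_symm _ hf₁.aestronglyMeasurable.enorm]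

end Slices

section Plane

lemma integrable_comp_mk {E : Type*} [NormedAddCommGroup E] {g : ℂ → E} (hg : Integrable g) :
    Integrable (fun p : ℝ × ℝ => g ⟨p.1, p.2⟩) :=
  ((Complex.volume_preserving_equiv_real_prod.symm _).integrable_comp_emb
    (MeasurableEquiv.measurableEmbedding _)).2 hg

lemma lintegral_comp_mk (g : ℂ → ℝ≥0∞) : ∫⁻ p : ℝ × ℝ, g ⟨p.1, p.2⟩ = ∫⁻ z, g z :=
  (Complex.volume_preserving_equiv_real_prod.symm _).lintegral_comp_emb
    (MeasurableEquiv.measurableEmbedding _) g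

lemma ae_of_ae_comp_mk {P : ℂ → Prop} (h : ∀ᵐ p : ℝ × ℝ, P ⟨p.1, p.2⟩) : ∀ᵐ z, P z :=
  Complex.volume_preserving_equiv_real_prod.quasiMeasurePreserving.ae h

variable {E : Type*} [NormedAddCommGroup E] [NormedSpace ℝ E]

lemma hasDerivAt_comp_mk_fst {Φ : ℂ → E} (hΦ : Differentiable ℝ Φ) (x y : ℝ) :
    HasDerivAt (fun s : ℝ => Φ ⟨s, y⟩) (fderiv ℝ Φ ⟨x, y⟩ 1) x := by
  have hline : HasDerivAt (fun s : ℝ => (⟨s, y⟩ : ℂ)) 1 x := by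
    simpa [← Complex.mk_eq_add_mul_I] using
      ((hasDerivAt_id x).ofReal_comp).add_const (y * Complex.I)
  exact (hΦ _).hasFDerivAt.comp_hasDerivAt x hline

lemma hasDerivAt_comp_mk_snd {Φ : ℂ → E} (hΦ : Differentiable ℝ Φ) (x y : ℝ) :
    HasDerivAt (fun t : ℝ => Φ ⟨x, t⟩) (fderiv ℝ Φ ⟨x, y⟩ Complex.I) y := by
  have hline : HasDerivAt (fun t : ℝ => (⟨x, t⟩ : ℂ)) Complex.I y := by
    simpa [← Complex.mk_eq_add_mul_I] using
      (((hasDerivAt_id y).ofReal_comp).mul_const Complex.I).const_add (x : ℂ)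
  exact (hΦ _).hasFDerivAt.comp_hasDerivAt y hline

end Plane

section Sobolev

variable {F E : Type*} [NormedAddCommGroup F] [NormedSpace ℝ F] [MeasurableSpace F]
  [NormedAddCommGroup E] [NormedSpace ℝ E]

/-- The `C^n` functions of the Sobolev space `W^{n,p}`. -/
def MemSobolev (n : ℕ) (p : ℝ≥0∞) (f : F → E) (μ : Measure F) : Prop :=
  ContDiff ℝ n f ∧ ∀ i ≤ n, MemLp (fun x => ‖iteratedFDeriv ℝ i f x‖) p μ

variable [OpensMeasurableSpace F] [SecondCountableTopology F] {n : ℕ} {f : F → E} {μ : Measure F}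

lemma MemSobolev.integrable (hf : MemSobolev n 1 f μ) : Integrable f μ :=
  (integrable_norm_iff hf.1.continuous.aestronglyMeasurable).1 <| by
    simpa using memLp_one_iff_integrable.1 (hf.2 0 (Nat.zero_le n))

lemma MemSobolev.integrable_fderiv (hf : MemSobolev n 1 f μ) (hn : 1 ≤ n) :
    Integrable (fderiv ℝ f) μ :=
  (integrable_norm_iff (hf.1.continuous_fderiv (by positivity)).aestronglyMeasurable).1 <| by
    simpa [norm_iteratedFDeriv_one] using memLp_one_iff_integrable.1 (hf.2 1 hn)

end Sobolev

section PlaneEmbeddings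

variable {E : Type*} [NormedAddCommGroup E] [NormedSpace ℝ E] [CompleteSpace E]

lemma enorm_apply_le_of_norm_eq_one {F : Type*} [NormedAddCommGroup F] [NormedSpace ℝ F]
    (L : ℂ →L[ℝ] F) {v : ℂ} (hv : ‖v‖ = 1) : ‖L v‖ₑ ≤ ‖L‖ₑ :=
  enorm_le_iff_norm_le.2 <| by simpa [hv] using L.le_opNorm v

theorem MemSobolev.lintegral_enorm_sq_le {Φ : ℂ → E} (hΦ : MemSobolev 1 1 Φ volume) :
    ∫⁻ z, ‖Φ z‖ₑ ^ 2 ≤ (∫⁻ z, ‖iteratedFDeriv ℝ 1 Φ z‖ₑ) ^ 2 := by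
  have hd : Differentiable ℝ Φ := hΦ.1.differentiable one_ne_zero
  have hi' := hΦ.integrable_fderiv le_rfl
  have hslice (v : ℂ) (hv : ‖v‖ = 1) :
      ∫⁻ p : ℝ × ℝ, ‖fderiv ℝ Φ ⟨p.1, p.2⟩ v‖ₑ ≤ ∫⁻ z, ‖iteratedFDeriv ℝ 1 Φ z‖ₑ := by
    rw [← lintegral_comp_mk]
    refine lintegral_mono fun p => ?_
    rw [← enorm_norm (iteratedFDeriv ℝ 1 Φ _), norm_iteratedFDeriv_one, enorm_norm]
    exact enorm_apply_le_of_norm_eq_one _ hv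
  calc ∫⁻ z, ‖Φ z‖ₑ ^ 2 = ∫⁻ p : ℝ × ℝ, ‖Φ ⟨p.1, p.2⟩‖ₑ ^ 2 := (lintegral_comp_mk _).symm
    _ ≤ (∫⁻ p : ℝ × ℝ, ‖fderiv ℝ Φ ⟨p.1, p.2⟩ 1‖ₑ) *
          ∫⁻ p : ℝ × ℝ, ‖fderiv ℝ Φ ⟨p.1, p.2⟩ Complex.I‖ₑ :=
        lintegral_enorm_sq_le_mul (integrable_comp_mk hΦ.integrable)
          (integrable_comp_mk (hi'.apply_continuousLinearMap 1))
          (integrable_comp_mk (hi'.apply_continuousLinearMap Complex.I))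
          (fun p => hasDerivAt_comp_mk_fst hd p.1 p.2) (fun p => hasDerivAt_comp_mk_snd hd p.1 p.2)
    _ ≤ (∫⁻ z, ‖iteratedFDeriv ℝ 1 Φ z‖ₑ) ^ 2 := by
        rw [sq]; exact mul_le_mul' (hslice 1 (by simp)) (hslice Complex.I (by simp))

theorem MemSobolev.memLp_two {Φ : ℂ → E} (hΦ : MemSobolev 1 1 Φ volume) : MemLp Φ 2 volume := by
  have hfin : ∫⁻ z, ‖iteratedFDeriv ℝ 1 Φ z‖ₑ < ∞ := by
    simpa only [HasFiniteIntegral, enorm_norm] using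
      (memLp_one_iff_integrable.1 (hΦ.2 1 le_rfl)).2
  refine ⟨hΦ.1.continuous.aestronglyMeasurable,
    (eLpNorm_lt_top_iff_lintegral_rpow_enorm_lt_top two_ne_zero ENNReal.ofNat_ne_top).2 ?_⟩
  simpa using hΦ.lintegral_enorm_sq_le.trans_lt (ENNReal.pow_lt_top hfin)

theorem MemSobolev.ae_enorm_le {Φ : ℂ → E} (hΦ : MemSobolev 2 1 Φ volume) :
    ∀ᵐ z, ‖Φ z‖ₑ ≤ ∫⁻ z, ‖iteratedFDeriv ℝ 2 Φ z‖ₑ := by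
  have hd : Differentiable ℝ Φ := hΦ.1.differentiable two_ne_zero
  have hd' : ContDiff ℝ 1 (fderiv ℝ Φ) := hΦ.1.fderiv_right one_add_one_eq_two.le
  have hi' := hΦ.integrable_fderiv one_le_two
  have hnorm (z : ℂ) : ‖fderiv ℝ (fderiv ℝ Φ) z‖ = ‖iteratedFDeriv ℝ 2 Φ z‖ := by
    rw [← norm_iteratedFDeriv_one, norm_iteratedFDeriv_fderiv]
  have hmixed_le (z : ℂ) : ‖fderiv ℝ (fderiv ℝ Φ) z Complex.I 1‖ ≤ ‖iteratedFDeriv ℝ 2 Φ z‖ := by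
    simpa [hnorm] using (fderiv ℝ (fderiv ℝ Φ) z).le_opNorm₂ Complex.I 1
  have hmixed_int : Integrable (fun z => fderiv ℝ (fderiv ℝ Φ) z Complex.I 1) :=
    (memLp_one_iff_integrable.1 (hΦ.2 2 le_rfl)).mono'
      (((hd'.continuous_fderiv one_ne_zero).clm_apply continuous_const).clm_apply
        continuous_const).aestronglyMeasurable (Eventually.of_forall hmixed_le)
  have hmixed (p : ℝ × ℝ) : HasDerivAt (fun t : ℝ => fderiv ℝ Φ ⟨p.1, t⟩ 1)
      (fderiv ℝ (fderiv ℝ Φ) ⟨p.1, p.2⟩ Complex.I 1) p.2 :=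
    (ContinuousLinearMap.apply ℝ E (1 : ℂ)).hasFDerivAt.comp_hasDerivAt p.2
      (hasDerivAt_comp_mk_snd (hd'.differentiable one_ne_zero) p.1 p.2)
  have hbound : ∫⁻ p : ℝ × ℝ, ‖fderiv ℝ (fderiv ℝ Φ) ⟨p.1, p.2⟩ Complex.I 1‖ₑ ≤
      ∫⁻ z, ‖iteratedFDeriv ℝ 2 Φ z‖ₑ := by
    rw [← lintegral_comp_mk]
    exact lintegral_mono fun p => enorm_le_iff_norm_le.2 (hmixed_le _)
  refine ae_of_ae_comp_mk ?_
  filter_upwards [ae_enorm_le_lintegral_enorm_mixed (integrable_comp_mk hΦ.integrable)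
    (integrable_comp_mk (hi'.apply_continuousLinearMap 1)) (integrable_comp_mk hmixed_int)
    (fun p => hasDerivAt_comp_mk_fst hd p.1 p.2) hmixed] with p hp
  exact hp.trans hbound

end PlaneEmbeddings

section Leibniz

variable {F : Type*} [NormedAddCommGroup F] [NormedSpace ℝ F]

lemma norm_iteratedFDeriv_one_smul_le {G : Type*} [NormedAddCommGroup G] [NormedSpace ℝ G]
    {f : F → ℝ} {g : F → G} (hf : ContDiff ℝ 1 f) (hg : ContDiff ℝ 1 g) (x : F) :
    ‖iteratedFDeriv ℝ 1 (fun y => f y • g y) x‖ ≤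
      ‖f x‖ * ‖iteratedFDeriv ℝ 1 g x‖ + ‖iteratedFDeriv ℝ 1 f x‖ * ‖g x‖ := by
  simpa [sum_range_succ, norm_iteratedFDeriv_zero] using
    norm_iteratedFDeriv_smul_le hf hg x le_rfl

variable {A : Type*} [NormedRing A] [NormedAlgebra ℝ A] {f g : F → A}

lemma norm_iteratedFDeriv_one_mul_le (hf : ContDiff ℝ 1 f) (hg : ContDiff ℝ 1 g) (x : F) :
    ‖iteratedFDeriv ℝ 1 (fun y => f y * g y) x‖ ≤
      ‖f x‖ * ‖iteratedFDeriv ℝ 1 g x‖ + ‖iteratedFDeriv ℝ 1 f x‖ * ‖g x‖ := by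
  simpa [sum_range_succ, norm_iteratedFDeriv_zero] using
    norm_iteratedFDeriv_mul_le hf hg x le_rfl

lemma norm_iteratedFDeriv_two_mul_le (hf : ContDiff ℝ 2 f) (hg : ContDiff ℝ 2 g) (x : F) :
    ‖iteratedFDeriv ℝ 2 (fun y => f y * g y) x‖ ≤ ‖f x‖ * ‖iteratedFDeriv ℝ 2 g x‖ +
      2 * ‖iteratedFDeriv ℝ 1 f x‖ * ‖iteratedFDeriv ℝ 1 g x‖ +
      ‖iteratedFDeriv ℝ 2 f x‖ * ‖g x‖ := by
  simpa [sum_range_succ, norm_iteratedFDeriv_zero] using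
    norm_iteratedFDeriv_mul_le hf hg x le_rfl

end Leibniz

section StarMulSelf

variable {F : Type*} [NormedAddCommGroup F] [NormedSpace ℝ F] {n : ℕ}
  {A : Type*} [NormedRing A] [NormedAlgebra ℝ A] [StarRing A] [NormedStarGroup A]
  [StarModule ℝ A]

lemma norm_iteratedFDeriv_star_le {f : F → A} (hf : ContDiff ℝ n f) {i : ℕ} (hi : i ≤ n)
    (x : F) : ‖iteratedFDeriv ℝ i (fun x => star (f x)) x‖ ≤ ‖iteratedFDeriv ℝ i f x‖ := by
  set L : A →L[ℝ] A := (starL' ℝ : A ≃L[ℝ] A).toContinuousLinearMap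
  have hL : ‖L‖ ≤ 1 := L.opNorm_le_bound zero_le_one fun a => by
    rw [one_mul]; exact (norm_star a).le
  calc ‖iteratedFDeriv ℝ i (fun x => star (f x)) x‖ ≤ ‖L‖ * ‖iteratedFDeriv ℝ i f x‖ :=
        L.norm_iteratedFDeriv_comp_left hf.contDiffAt (by exact_mod_cast hi)
    _ ≤ ‖iteratedFDeriv ℝ i f x‖ := mul_le_of_le_one_left (norm_nonneg _) hL

variable [MeasurableSpace F] [OpensMeasurableSpace F] {μ : Measure F}

/-- By Leibniz's rule each derivative of `f* f` is a sum of products of two derivatives of `f`,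
which are integrable by Hölder's inequality. -/
lemma MemSobolev.star_mul_self {f : F → A} (hf : MemSobolev n 2 f μ) :
    MemSobolev n 1 (fun x => star (f x) * f x) μ := by
  obtain ⟨hC, hL⟩ := hf
  have hstar : ContDiff ℝ n (fun x => star (f x)) :=
    (starL' ℝ : A ≃L[ℝ] A).contDiff.comp hC
  refine ⟨hstar.mul hC, fun i hi => memLp_one_iff_integrable.2 ?_⟩
  have hterm : ∀ j ∈ range (i + 1), Integrable (fun x => (i.choose j : ℝ) *
      (‖iteratedFDeriv ℝ j f x‖ * ‖iteratedFDeriv ℝ (i - j) f x‖)) μ := fun j hj =>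
    ((hL j (by grind)).integrable_mul (hL (i - j) (by grind))).const_mul _
  refine (integrable_finsetSum _ hterm).mono'
    ((hstar.mul hC).continuous_iteratedFDeriv (by exact_mod_cast hi)).norm.aestronglyMeasurable
    (Eventually.of_forall fun x => ?_)
  rw [norm_norm]
  refine (norm_iteratedFDeriv_mul_le hstar hC x (by exact_mod_cast hi)).trans
    (sum_le_sum fun j hj => ?_)
  rw [mul_assoc]
  gcongr
  exact norm_iteratedFDeriv_star_le hC (by grind) x

end StarMulSelf

section WeightedH2

variable {γ : ℝ} {u : ℂ → ℂ}

lemma H2gammaMem.memSobolev (hγ : 0 ≤ γ) (hu : H2gammaMem γ u) : MemSobolev 2 2 u volume :=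
  ⟨hu.1, fun i hi => (hu.2 i hi).mono'
    (hu.1.continuous_iteratedFDeriv (by exact_mod_cast hi)).norm.aestronglyMeasurable
    (Eventually.of_forall fun z => by
      rw [norm_norm]; exact le_mul_of_one_le_left (norm_nonneg _) (one_le_wt hγ z))⟩

lemma H2gammaMem.exists_ae_norm_le (hγ : 0 ≤ γ) (hu : H2gammaMem γ u) :
    ∃ M, ∀ᵐ z, ‖u z‖ ≤ M := by
  have hΦ := (hu.memSobolev hγ).star_mul_self
  set K := ∫⁻ z, ‖iteratedFDeriv ℝ 2 (fun z => star (u z) * u z) z‖ₑ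
  have hK : K ≠ ∞ := by
    simpa only [K, HasFiniteIntegral, enorm_norm] using
      (memLp_one_iff_integrable.1 (hΦ.2 2 le_rfl)).2.ne
  refine ⟨√K.toReal, hΦ.ae_enorm_le.mono fun z hz => ?_⟩
  rw [← ofReal_norm, ENNReal.ofReal_le_iff_le_toReal hK, CStarRing.norm_star_mul_self] at hz
  exact (Real.le_sqrt (norm_nonneg _) ENNReal.toReal_nonneg).2 (by rwa [sq])

lemma H2gammaMem.memSobolev_wt_smul_fderiv {δ : ℝ} (hu : H2gammaMem γ u) (hδ : δ ≤ γ) :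
    MemSobolev 1 2 (fun z => wt δ z • fderiv ℝ u z) volume := by
  have hDu : ContDiff ℝ 1 (fderiv ℝ u) := hu.1.fderiv_right one_add_one_eq_two.le
  have hC : ContDiff ℝ 1 (fun z => wt δ z • fderiv ℝ u z) := (contDiff_wt δ).smul hDu
  refine ⟨hC, fun i hi => ?_⟩
  have hmeas := (hC.continuous_iteratedFDeriv (by exact_mod_cast hi)).norm.aestronglyMeasurable
    (μ := volume)
  interval_cases i
  · refine (hu.2 1 one_le_two).mono' hmeas (Eventually.of_forall fun z => ?_)
    rw [norm_norm, norm_iteratedFDeriv_zero, norm_smul, Real.norm_of_nonneg (wt_pos δ z).le,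
      norm_iteratedFDeriv_one]
    gcongr
    exact wt_le_wt hδ z
  · refine ((hu.2 2 le_rfl).add ((hu.2 1 one_le_two).const_mul (|δ| / 2))).mono' hmeas
      (Eventually.of_forall fun z => ?_)
    rw [norm_norm, Pi.add_apply]
    refine (norm_iteratedFDeriv_one_smul_le (contDiff_wt δ) hDu z).trans ?_
    rw [norm_iteratedFDeriv_fderiv, Real.norm_of_nonneg (wt_pos δ z).le, norm_iteratedFDeriv_one,
      norm_iteratedFDeriv_one u]
    have h2 : ‖fderiv ℝ (wt δ) z‖ * ‖fderiv ℝ u z‖ ≤ |δ| / 2 * (wt γ z * ‖fderiv ℝ u z‖) :=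
      calc ‖fderiv ℝ (wt δ) z‖ * ‖fderiv ℝ u z‖ ≤ |δ| / 2 * wt δ z * ‖fderiv ℝ u z‖ := by
            gcongr; exact norm_fderiv_wt_le δ z
        _ ≤ |δ| / 2 * (wt γ z * ‖fderiv ℝ u z‖) := by
            rw [mul_assoc]; gcongr; exact wt_le_wt hδ z
    have h1 := mul_le_mul_of_nonneg_right (wt_le_wt hδ z) (norm_nonneg (iteratedFDeriv ℝ 2 u z))
    linarith

lemma H2gammaMem.memLp_wt_mul_sq (hγ : 0 ≤ γ) (hu : H2gammaMem γ u) :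
    MemLp (fun z => wt γ z * ‖iteratedFDeriv ℝ 1 u z‖ ^ 2) 2 volume := by
  have hΦ := (hu.memSobolev_wt_smul_fderiv (by linarith : γ / 2 ≤ γ)).star_mul_self.memLp_two
  refine hΦ.norm.mono' (((continuous_wt γ).mul
    ((hu.1.continuous_iteratedFDeriv one_le_two).norm.pow 2)).aestronglyMeasurable)
    (Eventually.of_forall fun z => le_of_eq ?_)
  rw [CStarRing.norm_star_mul_self, norm_smul, Real.norm_of_nonneg (wt_pos _ z).le,
    Real.norm_of_nonneg (mul_nonneg (wt_pos γ z).le (sq_nonneg _)), norm_iteratedFDeriv_one,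
    ← sq_wt_half γ z]
  ring

end WeightedH2

section BddH2gamma

variable {γ : ℝ}

structure BddH2gammaMem (γ : ℝ) (f : ℂ → ℂ) : Prop where
  toH2gammaMem : H2gammaMem γ f
  ae_norm_le : ∃ M, ∀ᵐ z, ‖f z‖ ≤ M
  memLp_wt_mul_sq : MemLp (fun z => wt γ z * ‖iteratedFDeriv ℝ 1 f z‖ ^ 2) 2 volume

lemma H2gammaMem.bddH2gammaMem (hγ : 0 ≤ γ) {u : ℂ → ℂ} (hu : H2gammaMem γ u) :
    BddH2gammaMem γ u :=
  ⟨hu, hu.exists_ae_norm_le hγ, hu.memLp_wt_mul_sq hγ⟩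

lemma memLp_wt_mul_of_ae_le {φ G : ℂ → ℝ} (hφ : Continuous φ) (hφ0 : ∀ z, 0 ≤ φ z)
    (hG : MemLp G 2 volume) (h : ∀ᵐ z, wt γ z * φ z ≤ G z) :
    MemLp (fun z => wt γ z * φ z) 2 volume :=
  hG.mono' ((continuous_wt γ).mul hφ).aestronglyMeasurable <| h.mono fun z hz => by
    rwa [Real.norm_of_nonneg (mul_nonneg (wt_pos γ z).le (hφ0 z))]

namespace BddH2gammaMem

variable {f g : ℂ → ℂ} (hf : BddH2gammaMem γ f) (hg : BddH2gammaMem γ g)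
include hf hg

lemma memLp_wt_mul_iteratedFDeriv_one_mul :
    MemLp (fun z => wt γ z * ‖iteratedFDeriv ℝ 1 (fun z => f z * g z) z‖) 2 volume ∧
      MemLp (fun z => wt γ z * ‖iteratedFDeriv ℝ 1 (fun z => f z * g z) z‖ ^ 2) 2 volume := by
  obtain ⟨⟨hfC, hf2⟩, ⟨M, hM⟩, hf4⟩ := hf
  obtain ⟨⟨hgC, hg2⟩, ⟨N, hN⟩, hg4⟩ := hg
  have hcont := ((hfC.mul hgC).continuous_iteratedFDeriv one_le_two).norm
  have hD1 : ∀ᵐ z, ‖iteratedFDeriv ℝ 1 (fun z => f z * g z) z‖ ≤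
      M * ‖iteratedFDeriv ℝ 1 g z‖ + ‖iteratedFDeriv ℝ 1 f z‖ * N := by
    filter_upwards [hM, hN] with z hz hz'
    refine (norm_iteratedFDeriv_one_mul_le (hfC.of_le one_le_two) (hgC.of_le one_le_two) z).trans ?_
    gcongr
  constructor
  · refine memLp_wt_mul_of_ae_le hcont (fun _ => norm_nonneg _)
      (((hg2 1 one_le_two).const_mul M).add ((hf2 1 one_le_two).const_mul N))
      (hD1.mono fun z hz => ?_)
    have := mul_le_mul_of_nonneg_left hz (wt_pos γ z).le
    simp only [Pi.add_apply]
    linarith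
  · refine memLp_wt_mul_of_ae_le (hcont.pow 2) (fun _ => by positivity)
      ((hg4.const_mul (2 * M ^ 2)).add (hf4.const_mul (2 * N ^ 2))) (hD1.mono fun z hz => ?_)
    set x := ‖iteratedFDeriv ℝ 1 f z‖
    set y := ‖iteratedFDeriv ℝ 1 g z‖
    have hsq : ‖iteratedFDeriv ℝ 1 (fun z => f z * g z) z‖ ^ 2 ≤
        2 * M ^ 2 * y ^ 2 + 2 * N ^ 2 * x ^ 2 :=
      (pow_le_pow_left₀ (norm_nonneg _) hz 2).trans (by nlinarith [sq_nonneg (M * y - x * N)])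
    have := mul_le_mul_of_nonneg_left hsq (wt_pos γ z).le
    simp only [Pi.add_apply]
    linarith

lemma memLp_wt_mul_iteratedFDeriv_two_mul :
    MemLp (fun z => wt γ z * ‖iteratedFDeriv ℝ 2 (fun z => f z * g z) z‖) 2 volume := by
  obtain ⟨⟨hfC, hf2⟩, ⟨M, hM⟩, hf4⟩ := hf
  obtain ⟨⟨hgC, hg2⟩, ⟨N, hN⟩, hg4⟩ := hg
  refine memLp_wt_mul_of_ae_le ((hfC.mul hgC).continuous_iteratedFDeriv le_rfl).norm
    (fun _ => norm_nonneg _)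
    ((((hg2 2 le_rfl).const_mul M).add (hf4.add hg4)).add ((hf2 2 le_rfl).const_mul N)) ?_
  filter_upwards [hM, hN] with z hz hz'
  set x := ‖iteratedFDeriv ℝ 1 f z‖
  set y := ‖iteratedFDeriv ℝ 1 g z‖
  have e1 := mul_le_mul_of_nonneg_right hz (norm_nonneg (iteratedFDeriv ℝ 2 g z))
  have e2 : 2 * x * y ≤ x ^ 2 + y ^ 2 := by nlinarith [sq_nonneg (x - y)]
  have e3 := mul_le_mul_of_nonneg_left hz' (norm_nonneg (iteratedFDeriv ℝ 2 f z))
  have := mul_le_mul_of_nonneg_left ((norm_iteratedFDeriv_two_mul_le hfC hgC z).trans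
    (by linarith : _ ≤ M * ‖iteratedFDeriv ℝ 2 g z‖ + (x ^ 2 + y ^ 2) +
      ‖iteratedFDeriv ℝ 2 f z‖ * N)) (wt_pos γ z).le
  simp only [Pi.add_apply]
  linarith

lemma mul : BddH2gammaMem γ (fun z => f z * g z) := by
  have hfg1 := memLp_wt_mul_iteratedFDeriv_one_mul hf hg
  have hfg2 := memLp_wt_mul_iteratedFDeriv_two_mul hf hg
  obtain ⟨⟨hfC, -⟩, ⟨M, hM⟩, -⟩ := hf
  obtain ⟨⟨hgC, hg2⟩, ⟨N, hN⟩, -⟩ := hg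
  refine ⟨⟨hfC.mul hgC, fun i hi => ?_⟩, ⟨M * N, ?_⟩, hfg1.2⟩
  · interval_cases i
    · refine memLp_wt_mul_of_ae_le ((hfC.mul hgC).continuous_iteratedFDeriv (by norm_num)).norm
        (fun _ => norm_nonneg _) ((hg2 0 (by norm_num)).const_mul M) (hM.mono fun z hz => ?_)
      simp only [norm_iteratedFDeriv_zero, norm_mul]
      rw [mul_left_comm]
      exact mul_le_mul_of_nonneg_right hz (mul_nonneg (wt_pos γ z).le (norm_nonneg _))
    · exact hfg1.1
    · exact hfg2
  · filter_upwards [hM, hN] with z hz hz'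
    rw [norm_mul]
    exact mul_le_mul hz hz' (norm_nonneg _) ((norm_nonneg _).trans hz)

end BddH2gammaMem

end BddH2gamma

/-- For `γ > 0`, the space `H²_γ(ℝ²)` is closed under powers:
if `u ∈ H²_γ(ℝ²)` and `k ≥ 1`, then `u^k ∈ H²_γ(ℝ²)`. -/
theorem weighted_H2_closed_under_powers (γ : ℝ) (hγ : 0 < γ) (u : ℂ → ℂ)
    (hu : H2gammaMem γ u) (k : ℕ) (hk : 1 ≤ k) :
    H2gammaMem γ (fun z => u z ^ k) := by
  have hu' := hu.bddH2gammaMem hγ.le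
  suffices BddH2gammaMem γ (fun z => u z ^ k) from this.toH2gammaMem
  induction k, hk using Nat.le_induction with
  | base => simpa using hu'
  | succ k _ ih => simpa [pow_succ] using ih.mul hu'
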